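/- Let W = (S, ≼, U, A, C) be a workflow authorization policy with |S| = N and t ≥ 0 an integer budget. Then W is one-shot resilient for budget t if and only if there exists a functional sequence π = (s₁,u₁)(s₂,u₂)⋯(s_N,u_N) such that (a) θ_π is a valid plan, (b) every prefix of π has a causally closed domain (hence every prefix is a play), and (c) for every 0 ≤ i ≤ N−1, the workflow authorization policy W_i obtained from W by successively applying the projection operation with (s₁,u₁), …, (s_i,u_i) is statically resilient for budget t (so in particular W₀ = W is statically resilient for budget t). -/

import Mathlib

/-- A workflow authorization policy `W = (S, ≼, U, A, C)`:
steps `S`, an ordering relation `ord` (the partial order `≼`), users `U`,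
a step authorization relation `A ⊆ S × U`, and a set `C` of constraints.
A constraint is a pair `(T, Θ)` where `T ⊆ S` and `Θ` is a set of functions
from `T` to `U` (represented as `σ → Option υ` with domain exactly `T`). -/
structure WAP (σ υ : Type) where
  S : Finset σ
  ord : σ → σ → Prop
  U : Finset υ
  A : Set (σ × υ)
  C : Set (Finset σ × Set (σ → Option υ))

namespace WAP

variable {σ υ : Type} [DecidableEq σ] [DecidableEq υ]

/-- Well-formedness: `ord` is a partial order on `S`, `A ⊆ S × U`, and every
constraint `(T, Θ)` has `T ⊆ S` and `Θ` a set of functions from `T` to `U`. -/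
def WellFormed (W : WAP σ υ) : Prop :=
  (∀ s ∈ W.S, W.ord s s) ∧
  (∀ s₁ ∈ W.S, ∀ s₂ ∈ W.S, W.ord s₁ s₂ → W.ord s₂ s₁ → s₁ = s₂) ∧
  (∀ s₁ ∈ W.S, ∀ s₂ ∈ W.S, ∀ s₃ ∈ W.S, W.ord s₁ s₂ → W.ord s₂ s₃ → W.ord s₁ s₃) ∧
  (∀ p ∈ W.A, p.1 ∈ W.S ∧ p.2 ∈ W.U) ∧
  (∀ c ∈ W.C, c.1 ⊆ W.S ∧
    ∀ θ ∈ c.2, (∀ s, θ s ≠ none ↔ s ∈ c.1) ∧ ∀ s u, θ s = some u → u ∈ W.U)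

/-- A partial plan: a partial function from `S` to `U` whose domain is
causally closed (if `s₁` is assigned and `s₂ ≺ s₁` then `s₂` is assigned). -/
def IsPartialPlan (W : WAP σ υ) (θ : σ → Option υ) : Prop :=
  (∀ s u, θ s = some u → s ∈ W.S ∧ u ∈ W.U) ∧
  ∀ s₁ s₂, s₁ ∈ W.S → s₂ ∈ W.S → θ s₁ ≠ none → W.ord s₂ s₁ → s₂ ≠ s₁ → θ s₂ ≠ none

/-- Restriction of a partial plan to a set `T` of steps. -/
def restrictTo (θ : σ → Option υ) (T : Finset σ) : σ → Option υ :=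
  fun s => if s ∈ T then θ s else none

/-- Validity of a (partial) plan: every assignment is authorized, and every
constraint whose step set is contained in the domain is satisfied. -/
def Valid (W : WAP σ υ) (θ : σ → Option υ) : Prop :=
  (∀ s u, θ s = some u → (s, u) ∈ W.A) ∧
  ∀ c ∈ W.C, (∀ s ∈ c.1, θ s ≠ none) → restrictTo θ c.1 ∈ c.2

/-- A plan: a partial plan whose domain is all of `S`. -/
def IsPlan (W : WAP σ υ) (θ : σ → Option υ) : Prop :=
  W.IsPartialPlan θ ∧ ∀ s ∈ W.S, θ s ≠ none

def IsValidPlan (W : WAP σ υ) (θ : σ → Option υ) : Prop :=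
  W.IsPlan θ ∧ W.Valid θ

/-- `θ` assigns no user from `Δ`. -/
def Avoids (θ : σ → Option υ) (Δ : Finset υ) : Prop :=
  ∀ s u, θ s = some u → u ∉ Δ

/-- Static resiliency for budget `t`. -/
def StaticallyResilient (W : WAP σ υ) (t : ℕ) : Prop :=
  ∀ Δ : Finset υ, Δ ⊆ W.U → Δ.card ≤ t → ∃ θ, W.IsValidPlan θ ∧ Avoids θ Δ

/-- A move of Player 1: assign a user `u ∈ U ∖ Δ` to a not-yet-assigned step,
so that the result remains a causally closed partial plan and remains valid
(if the extension were invalid, Player 2 would win at once). -/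
def P1Move (W : WAP σ υ) (Δ : Finset υ) (θ θ' : σ → Option υ) : Prop :=
  ∃ s u, s ∈ W.S ∧ θ s = none ∧ u ∈ W.U ∧ u ∉ Δ ∧
    θ' = Function.update θ s (some u) ∧
    W.IsPartialPlan θ' ∧ W.Valid θ'

/-- A move of Player 2 in the one-shot resiliency game: either pass, or
(if it has not yet struck) strike, adding at most `t` users of `U` to `Δ`. -/
def OneShotP2Move (W : WAP σ υ) (t : ℕ) (Δ : Finset υ) (struck : Bool)
    (Δ' : Finset υ) (struck' : Bool) : Prop :=
  (Δ' = Δ ∧ struck' = struck) ∨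
  (struck = false ∧ struck' = true ∧ Δ ⊆ Δ' ∧ Δ' ⊆ W.U ∧ (Δ' \ Δ).card ≤ t)

/-- Player 1 can force a win of the one-shot resiliency game within `n`
more rounds, from the given configuration (`struck` records whether
Player 2 has already struck).  Player 1 has won once the (valid) partial
plan has been extended to a valid plan on all of `S`; otherwise, for every
move of Player 2 there must be a move of Player 1 from which Player 1 can
still force a win.  Since each round assigns one more step, the game from
the initial configuration lasts at most `|S|` rounds. -/
def OneShotWins (W : WAP σ υ) (t : ℕ) :
    ℕ → Finset υ → (σ → Option υ) → Bool → Prop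
  | 0, _, θ, _ => (∀ s ∈ W.S, θ s ≠ none) ∧ W.IsPartialPlan θ ∧ W.Valid θ
  | n + 1, Δ, θ, struck =>
      ((∀ s ∈ W.S, θ s ≠ none) ∧ W.IsPartialPlan θ ∧ W.Valid θ) ∨
      ((∃ s ∈ W.S, θ s = none) ∧
        ∀ Δ' struck', OneShotP2Move W t Δ struck Δ' struck' →
          ∃ θ', P1Move W Δ' θ θ' ∧ OneShotWins W t n Δ' θ' struck')

/-- One-shot resiliency for budget `t`: Player 1 wins the one-shot
resiliency game (from the initial configuration `(∅, ∅)`) no matter how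
Player 2 plays. -/
def OneShotResilient (W : WAP σ υ) (t : ℕ) : Prop :=
  OneShotWins W t W.S.card ∅ (fun _ => none) false

/-- A move of Player 2 in the decremental resiliency game: add zero or more
users of `U` to `Δ`, subject to `|Δ| ≤ t` throughout. -/
def DecP2Move (W : WAP σ υ) (t : ℕ) (Δ Δ' : Finset υ) : Prop :=
  Δ ⊆ Δ' ∧ Δ' ⊆ W.U ∧ Δ'.card ≤ t

/-- Player 1 can force a win of the decremental resiliency game within `n`
more rounds. -/
def DecWins (W : WAP σ υ) (t : ℕ) : ℕ → Finset υ → (σ → Option υ) → Prop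
  | 0, _, θ => (∀ s ∈ W.S, θ s ≠ none) ∧ W.IsPartialPlan θ ∧ W.Valid θ
  | n + 1, Δ, θ =>
      ((∀ s ∈ W.S, θ s ≠ none) ∧ W.IsPartialPlan θ ∧ W.Valid θ) ∨
      ((∃ s ∈ W.S, θ s = none) ∧
        ∀ Δ', DecP2Move W t Δ Δ' →
          ∃ θ', P1Move W Δ' θ θ' ∧ DecWins W t n Δ' θ')

/-- Decremental resiliency for budget `t`: Player 1 wins the decremental
resiliency game no matter how Player 2 plays. -/
def DecrementallyResilient (W : WAP σ υ) (t : ℕ) : Prop :=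
  DecWins W t W.S.card ∅ (fun _ => none)

end WAP
namespace WAP

variable {σ υ : Type} [DecidableEq σ] [DecidableEq υ]

/-- The partial function `θ_τ` determined by a sequence `τ ∈ (S × U)*`. -/
def planOf : List (σ × υ) → σ → Option υ
  | [], _ => none
  | (s, u) :: rest, s' => if s' = s then some u else planOf rest s'

/-- A sequence is functional if no step occurs more than once in it. -/
def Functional (τ : List (σ × υ)) : Prop := (τ.map Prod.fst).Nodup

/-- A play: a functional sequence `τ` such that `θ_τ` is a valid partial plan. -/
def IsPlay (W : WAP σ υ) (τ : List (σ × υ)) : Prop :=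
  Functional τ ∧ W.IsPartialPlan (planOf τ) ∧ W.Valid (planOf τ)

/-- A terminus: a play `π` with `dom(θ_π) = S`. -/
def IsTerminus (W : WAP σ υ) (π : List (σ × υ)) : Prop :=
  W.IsPlay π ∧ ∀ s ∈ W.S, planOf π s ≠ none

/-- A strike `(τ, Δ)`: `τ` is a play with `dom(θ_τ) ≠ S` (the trigger),
`Δ ⊆ U` and `|Δ| ≤ t`. -/
def IsStrike (W : WAP σ υ) (t : ℕ) (τ : List (σ × υ)) (Δ : Finset υ) : Prop :=
  W.IsPlay τ ∧ (∃ s ∈ W.S, planOf τ s = none) ∧ Δ ⊆ W.U ∧ Δ.card ≤ t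

/-- The strike `(τ, Δ)` invalidates the terminus `π`: `τ` is a prefix of `π`
and no user from `Δ` is assigned by `π` after the moves in `τ`. -/
def Invalidates (τ : List (σ × υ)) (Δ : Finset υ) (π : List (σ × υ)) : Prop :=
  τ <+: π ∧ ∀ p ∈ π.drop τ.length, p.2 ∉ Δ

/-- The strike `(τ, Δ)` is successful: it invalidates every terminus having
its trigger `τ` as a prefix. -/
def SuccessfulStrike (W : WAP σ υ) (t : ℕ) (τ : List (σ × υ)) (Δ : Finset υ) : Prop :=
  W.IsStrike t τ Δ ∧ ∀ π, W.IsTerminus π → τ <+: π → Invalidates τ Δ π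

/-- The singleton partial function `{(s, u)}`. -/
def single (s : σ) (u : υ) : σ → Option υ :=
  fun s' => if s' = s then some u else none

/-- The projection `project(W, s, u)` of a workflow authorization policy. -/
def project (W : WAP σ υ) (s : σ) (u : υ) : WAP σ υ where
  S := W.S.erase s
  ord := fun a b => W.ord a b ∧ a ∈ W.S.erase s ∧ b ∈ W.S.erase s
  U := W.U
  A := {p | p ∈ W.A ∧ p.1 ∈ W.S.erase s}
  C := {c | c ∈ W.C ∧ s ∉ c.1} ∪
       {c' | ∃ c ∈ W.C, s ∈ c.1 ∧ 1 < c.1.card ∧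
          c' = (c.1.erase s,
                {θ' | ∃ θ ∈ c.2, θ s = some u ∧ θ' = restrictTo θ (c.1.erase s)})}

/-- Iterated projection along a sequence of assignments. -/
def projectSeq (W : WAP σ υ) (τ : List (σ × υ)) : WAP σ υ :=
  τ.foldl (fun W' p => W'.project p.1 p.2) W

end WAP

/-! While Player 2 passes, Player 1's winning strategy traces a sequence `π`. A strike of `Δ`
after the prefix `τ` of `π` can be survived exactly when `θ_τ` extends to a valid plan that uses
no user of `Δ` on the open steps, and deleting `τ` turns such completions into the valid plans
of the projection `W_τ` that avoid `Δ`. Conversely, given `π`, Player 1 follows `π` until the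
strike and then completes along a valid plan of the projection, always assigning a
`≼`-minimal open step so that the partial plan stays causally closed. -/

namespace WAP

theorem isPlan_iff {σ υ : Type} (W : WAP σ υ) (θ : σ → Option υ) :
    W.IsPlan θ ↔ (∀ s u, θ s = some u → s ∈ W.S ∧ u ∈ W.U) ∧ ∀ s ∈ W.S, θ s ≠ none :=
  ⟨fun h => ⟨h.1.1, h.2⟩, fun h => ⟨⟨h.1, fun _ s₂ _ hs₂ _ _ _ => h.2 s₂ hs₂⟩, h.2⟩⟩

variable {σ υ : Type} [DecidableEq σ]

theorem isValidPlan_iff (W : WAP σ υ) (θ : σ → Option υ) :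
    W.IsValidPlan θ ↔ (∀ s ∈ W.S, θ s ≠ none) ∧ W.IsPartialPlan θ ∧ W.Valid θ := by
  unfold IsValidPlan IsPlan
  tauto

def Extends (θ' θ : σ → Option υ) : Prop := ∀ s u, θ s = some u → θ' s = some u

def unassigned (W : WAP σ υ) (θ : σ → Option υ) : Finset σ := W.S.filter (fun s => θ s = none)

theorem planOf_cons (s : σ) (u : υ) (τ : List (σ × υ)) :
    planOf ((s, u) :: τ) = Function.update (planOf τ) s (some u) := by
  funext x
  simp only [planOf, Function.update_apply]

theorem planOf_append (τ ρ : List (σ × υ)) (s : σ) :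
    planOf (τ ++ ρ) s = (planOf τ s).or (planOf ρ s) := by
  induction τ with
  | nil => simp [planOf]
  | cons p τ ih =>
    obtain ⟨a, b⟩ := p
    by_cases h : s = a <;> simp [planOf, h, ih]

theorem planOf_ne_none_iff (τ : List (σ × υ)) (s : σ) :
    planOf τ s ≠ none ↔ s ∈ τ.map Prod.fst := by
  induction τ with
  | nil => simp [planOf]
  | cons p τ ih =>
    obtain ⟨a, b⟩ := p
    by_cases h : s = a <;> simp [planOf, h, ih]

theorem planOf_eq_none_iff (τ : List (σ × υ)) (s : σ) :
    planOf τ s = none ↔ s ∉ τ.map Prod.fst := by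
  rw [← planOf_ne_none_iff, not_not]

theorem planOf_append_singleton (τ : List (σ × υ)) (s : σ) (u : υ) (h : planOf τ s = none) :
    planOf (τ ++ [(s, u)]) = Function.update (planOf τ) s (some u) := by
  funext x
  rw [planOf_append, planOf_cons, Function.update_apply, Function.update_apply]
  by_cases hx : x = s
  · simp [hx, h]
  · simp [hx, planOf]

theorem extends_planOf_append (τ ρ : List (σ × υ)) : Extends (planOf (τ ++ ρ)) (planOf τ) := by
  intro s u h
  rw [planOf_append, h, Option.some_or]

theorem card_unassigned_planOf (W : WAP σ υ) {τ : List (σ × υ)} (hτ : Functional τ)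
    (hτS : ∀ s ∈ τ.map Prod.fst, s ∈ W.S) :
    (W.unassigned (planOf τ)).card = W.S.card - τ.length := by
  have hsteps : W.unassigned (planOf τ) = W.S \ (τ.map Prod.fst).toFinset := by
    ext s
    simp [unassigned, planOf_eq_none_iff]
  rw [hsteps, Finset.card_sdiff_of_subset (fun s hs => hτS s (List.mem_toFinset.1 hs)),
    List.toFinset_card_of_nodup hτ, List.length_map]

theorem Valid.mono {W : WAP σ υ} {θ θ' : σ → Option υ} (hθ : W.Valid θ) (hext : Extends θ θ') :
    W.Valid θ' := by
  refine ⟨fun s u h => hθ.1 s u (hext s u h), fun c hc hdom => ?_⟩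
  have hdom' : ∀ s ∈ c.1, θ s ≠ none := fun s hs => by
    obtain ⟨u, hu⟩ := Option.ne_none_iff_exists'.1 (hdom s hs)
    simp [hext s u hu]
  convert hθ.2 c hc hdom' using 1
  funext s
  unfold restrictTo
  split_ifs with hs
  · obtain ⟨u, hu⟩ := Option.ne_none_iff_exists'.1 (hdom s hs)
    rw [hu, hext s u hu]
  · rfl

theorem restrictTo_update_of_notMem (θ : σ → Option υ) {T : Finset σ} {s : σ} (hs : s ∉ T)
    (v : Option υ) : restrictTo (Function.update θ s v) T = restrictTo θ T := by
  funext x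
  unfold restrictTo
  split_ifs with hx
  · rw [Function.update_of_ne (ne_of_mem_of_not_mem hx hs)]
  · rfl

theorem restrictTo_restrictTo_of_subset (θ : σ → Option υ) {T T' : Finset σ} (h : T' ⊆ T) :
    restrictTo (restrictTo θ T) T' = restrictTo θ T' := by
  funext x
  unfold restrictTo
  split_ifs with h' h'' <;> first | rfl | exact absurd (h h') h''

theorem project_S (W : WAP σ υ) (s : σ) (u : υ) : (W.project s u).S = W.S.erase s := rfl

theorem projectSeq_cons (W : WAP σ υ) (p : σ × υ) (τ : List (σ × υ)) :
    W.projectSeq (p :: τ) = (W.project p.1 p.2).projectSeq τ := rfl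

theorem projectSeq_U (W : WAP σ υ) (τ : List (σ × υ)) : (W.projectSeq τ).U = W.U := by
  induction τ generalizing W with
  | nil => rfl
  | cons p τ ih => exact ih _

theorem projectSeq_S_subset (W : WAP σ υ) (τ : List (σ × υ)) : (W.projectSeq τ).S ⊆ W.S := by
  induction τ generalizing W with
  | nil => exact subset_rfl
  | cons p τ ih => exact (ih _).trans (Finset.erase_subset _ _)

theorem notMem_projectSeq_S (W : WAP σ υ) {τ : List (σ × υ)} {s : σ} (hs : s ∈ τ.map Prod.fst) :
    s ∉ (W.projectSeq τ).S := by
  induction τ generalizing W with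
  | nil => simp at hs
  | cons p τ ih =>
    rw [projectSeq_cons]
    rcases List.mem_cons.1 hs with rfl | hs
    · exact fun h => Finset.notMem_erase _ _ (projectSeq_S_subset _ τ h)
    · exact ih _ hs

theorem WellFormed.project {W : WAP σ υ} (hW : W.WellFormed) (s : σ) (u : υ) :
    (W.project s u).WellFormed := by
  obtain ⟨hrefl, hanti, htrans, hA, hC⟩ := hW
  refine ⟨fun a ha => ⟨hrefl a (Finset.mem_of_mem_erase ha), ha, ha⟩,
    fun a ha b hb hab hba => hanti a (Finset.mem_of_mem_erase ha) b (Finset.mem_of_mem_erase hb)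
      hab.1 hba.1,
    fun a ha b hb c hc hab hbc => ⟨htrans a (Finset.mem_of_mem_erase ha) b
      (Finset.mem_of_mem_erase hb) c (Finset.mem_of_mem_erase hc) hab.1 hbc.1, ha, hc⟩,
    fun p hp => ⟨hp.2, (hA p hp.1).2⟩, ?_⟩
  rintro c (⟨hc, hsc⟩ | ⟨c, hc, -, -, rfl⟩)
  · exact ⟨fun x hx => Finset.mem_erase.2 ⟨ne_of_mem_of_not_mem hx hsc, (hC c hc).1 hx⟩,
      (hC c hc).2⟩
  · refine ⟨Finset.erase_subset_erase s (hC c hc).1, ?_⟩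
    rintro _ ⟨θ, hθ, -, rfl⟩
    obtain ⟨hdom, hval⟩ := (hC c hc).2 θ hθ
    refine ⟨fun x => ?_, fun x v hv => ?_⟩
    · by_cases hx : x ∈ c.1.erase s
      · simp [restrictTo, hx, hdom x, Finset.mem_of_mem_erase hx]
      · simp [restrictTo, hx]
    · by_cases hx : x ∈ c.1.erase s
      · exact hval x v (by simpa [restrictTo, hx] using hv)
      · simp [restrictTo, hx] at hv

section ProjectionValid

variable {W : WAP σ υ} {θ : σ → Option υ} {s : σ} {u : υ}

theorem Valid.project (hW : W.WellFormed) (hθs : θ s = none)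
    (hθ : W.Valid (Function.update θ s (some u))) : (W.project s u).Valid θ := by
  refine ⟨fun x v hx => ?_, ?_⟩
  · have hxs : x ≠ s := fun h => by simp [h, hθs] at hx
    have hA := hθ.1 x v (by rwa [Function.update_of_ne hxs])
    exact ⟨hA, Finset.mem_erase.2 ⟨hxs, (hW.2.2.2.1 _ hA).1⟩⟩
  rintro c (⟨hc, hsc⟩ | ⟨c, hc, hsc, -, rfl⟩) hdom
  · have := hθ.2 c hc fun x hx => by
      rw [Function.update_of_ne (ne_of_mem_of_not_mem hx hsc)]
      exact hdom x hx
    rwa [restrictTo_update_of_notMem _ hsc] at this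
  · have hdom' : ∀ x ∈ c.1, Function.update θ s (some u) x ≠ none := fun x hx => by
      by_cases hxs : x = s
      · simp [hxs]
      · rw [Function.update_of_ne hxs]
        exact hdom x (Finset.mem_erase.2 ⟨hxs, hx⟩)
    refine ⟨_, hθ.2 c hc hdom', by simp [restrictTo, hsc], ?_⟩
    rw [restrictTo_restrictTo_of_subset _ (Finset.erase_subset s c.1),
      restrictTo_update_of_notMem _ (Finset.notMem_erase s c.1)]

theorem Valid.of_project (hW : W.WellFormed) (hsu : W.Valid (single s u))
    (hθ : (W.project s u).Valid θ) : W.Valid (Function.update θ s (some u)) := by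
  refine ⟨fun x v hx => ?_, fun c hc hdom => ?_⟩
  · by_cases hxs : x = s
    · obtain rfl : u = v := by simpa [hxs] using hx
      exact hxs ▸ hsu.1 s u (by simp [single])
    · exact (hθ.1 x v (by rwa [Function.update_of_ne hxs] at hx)).1
  have hdom' : ∀ x ∈ c.1.erase s, θ x ≠ none := fun x hx => by
    simpa [Function.update_of_ne (Finset.ne_of_mem_erase hx)] using
      hdom x (Finset.mem_of_mem_erase hx)
  by_cases hsc : s ∈ c.1
  swap
  · rw [restrictTo_update_of_notMem _ hsc]
    exact hθ.2 c (Or.inl ⟨hc, hsc⟩) fun x hx => hdom' x (Finset.mem_erase.2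
      ⟨ne_of_mem_of_not_mem hx hsc, hx⟩)
  rcases lt_or_ge 1 c.1.card with hcard | hcard
  · obtain ⟨θ₀, hθ₀, hθ₀s, heq⟩ := hθ.2 _ (Or.inr ⟨c, hc, hsc, hcard, rfl⟩) hdom'
    convert hθ₀ using 1
    funext x
    by_cases hx : x ∈ c.1
    · by_cases hxs : x = s
      · simp [restrictTo, hxs, hsc, hθ₀s]
      · have := congrFun heq x
        simp only [restrictTo, Finset.mem_erase, hx] at this
        simpa [restrictTo, hx, hxs] using this
    · have : θ₀ x = none := by
        by_contra h
        exact hx ((((hW.2.2.2.2 c hc).2 θ₀ hθ₀).1 x).1 h)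
      simp [restrictTo, hx, this]
  · have hc1 : c.1 = {s} := Finset.eq_singleton_iff_unique_mem.2
      ⟨hsc, fun x hx => Finset.card_le_one.1 hcard x hx s hsc⟩
    convert hsu.2 c hc (fun x hx => by simp_all [single]) using 1
    funext x
    by_cases hxs : x = s <;> simp [restrictTo, single, hc1, hxs]

theorem isValidPlan_project_iff (hW : W.WellFormed) (hsu : W.Valid (single s u))
    (hθs : θ s = none) :
    (W.project s u).IsValidPlan θ ↔ W.IsValidPlan (Function.update θ s (some u)) := by
  have hsuS := hW.2.2.2.1 _ (hsu.1 s u (by simp [single]))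
  have hplan : (W.project s u).IsPlan θ ↔ W.IsPlan (Function.update θ s (some u)) := by
    simp only [isPlan_iff, project_S]
    constructor
    · rintro ⟨hval, htot⟩
      refine ⟨fun x v hx => ?_, fun x hx => ?_⟩
      · by_cases hxs : x = s
        · obtain rfl : u = v := by simpa [hxs] using hx
          exact hxs ▸ hsuS
        · rw [Function.update_of_ne hxs] at hx
          exact ⟨Finset.mem_of_mem_erase (hval x v hx).1, (hval x v hx).2⟩
      · by_cases hxs : x = s
        · simp [hxs]
        · rw [Function.update_of_ne hxs]
          exact htot x (Finset.mem_erase.2 ⟨hxs, hx⟩)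
    · rintro ⟨hval, htot⟩
      refine ⟨fun x v hx => ?_, fun x hx => ?_⟩
      · have hxs : x ≠ s := fun h => by simp [h, hθs] at hx
        have := hval x v (by rwa [Function.update_of_ne hxs])
        exact ⟨Finset.mem_erase.2 ⟨hxs, this.1⟩, this.2⟩
      · have := htot x (Finset.mem_of_mem_erase hx)
        rwa [Function.update_of_ne (Finset.ne_of_mem_erase hx)] at this
  exact and_congr hplan ⟨Valid.of_project hW hsu, Valid.project hW hθs⟩

end ProjectionValid

section ProjectSeq

theorem planOf_cons_or (s : σ) (u : υ) (τ : List (σ × υ)) (θ : σ → Option υ) :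
    (fun x => (planOf ((s, u) :: τ) x).or (θ x)) =
      Function.update (fun x => (planOf τ x).or (θ x)) s (some u) := by
  funext x
  by_cases hx : x = s <;> simp [planOf, hx]

theorem isValidPlan_projectSeq_iff {W : WAP σ υ} (hW : W.WellFormed) {τ : List (σ × υ)}
    (hτ : Functional τ) (hτv : W.Valid (planOf τ)) {θ : σ → Option υ}
    (hθ : ∀ s ∈ τ.map Prod.fst, θ s = none) :
    (W.projectSeq τ).IsValidPlan θ ↔ W.IsValidPlan (fun s => (planOf τ s).or (θ s)) := by
  induction τ generalizing W with
  | nil => simp [projectSeq, planOf]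
  | cons p τ ih =>
    obtain ⟨a, b⟩ := p
    obtain ⟨ha, hτ⟩ := List.nodup_cons.1 hτ
    have hsu : W.Valid (single a b) := hτv.mono fun x v hx => by
      obtain ⟨rfl, rfl⟩ : x = a ∧ b = v := by simpa [single] using hx
      simp [planOf]
    have hτv' : (W.project a b).Valid (planOf τ) :=
      Valid.project hW ((planOf_eq_none_iff τ a).2 ha) (by rwa [← planOf_cons])
    rw [projectSeq_cons, ih (hW.project a b) hτ hτv' fun s hs => hθ s (List.mem_cons_of_mem _ hs),
      isValidPlan_project_iff hW hsu (by simp [(planOf_eq_none_iff τ a).2 ha, hθ a (by simp)]),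
      planOf_cons_or]

end ProjectSeq

section Completion

def Completable (W : WAP σ υ) (Δ : Finset υ) (θ : σ → Option υ) : Prop :=
  ∃ θ', W.IsValidPlan θ' ∧ Extends θ' θ ∧ ∀ s u, θ s = none → θ' s = some u → u ∉ Δ

variable {W : WAP σ υ} {Δ : Finset υ} {θ θ' : σ → Option υ}

theorem IsValidPlan.completable (h : W.IsValidPlan θ) (Δ : Finset υ) : W.Completable Δ θ :=
  ⟨θ, h, fun _ _ => id, fun s u h₁ h₂ => by simp [h₁] at h₂⟩

theorem Completable.valid (h : W.Completable Δ θ) : W.Valid θ := by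
  obtain ⟨θ', hθ', hext, -⟩ := h
  exact hθ'.2.mono hext

theorem Completable.isValidPlan (h : W.Completable Δ θ) (hθ : W.IsPartialPlan θ)
    (hemp : W.unassigned θ = ∅) : W.IsValidPlan θ :=
  ⟨⟨hθ, fun s hs hnone => Finset.notMem_empty s
    (hemp ▸ (Finset.mem_filter.2 ⟨hs, hnone⟩ : s ∈ W.unassigned θ))⟩, h.valid⟩

theorem Completable.of_p1Move (h : W.Completable Δ θ') (hmove : P1Move W Δ θ θ') :
    W.Completable Δ θ := by
  obtain ⟨s, u, -, hθs, -, huΔ, rfl, -, -⟩ := hmove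
  obtain ⟨θc, hθc, hext, havoid⟩ := h
  refine ⟨θc, hθc, fun x v hx => hext x v ?_, fun x v hx hv => ?_⟩
  · rwa [Function.update_of_ne (fun h => by simp [h, hθs] at hx)]
  · by_cases hxs : x = s
    · subst hxs
      obtain rfl : v = u := by simpa [hv] using hext x u (by simp)
      exact huΔ
    · exact havoid x v (by rwa [Function.update_of_ne hxs]) hv

theorem WellFormed.exists_minimal (hW : W.WellFormed) {R : Finset σ} (hRS : R ⊆ W.S)
    (hR : R.Nonempty) : ∃ s ∈ R, ∀ s' ∈ R, W.ord s' s → s' = s := by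
  classical
  -- a step of `R` with fewest strict predecessors in `R` is minimal
  let below x := R.filter fun y => W.ord y x ∧ y ≠ x
  obtain ⟨m, hm, hmin⟩ := R.exists_min_image (fun x => (below x).card) hR
  refine ⟨m, hm, fun s' hs' hord => by_contra fun hne => ?_⟩
  have hsub : below s' ⊂ below m := by
    refine (Finset.ssubset_iff_of_subset fun y hy => ?_).2 ⟨s', by simp [below, hs', hord, hne],
      by simp [below]⟩
    simp only [below, Finset.mem_filter] at hy ⊢
    refine ⟨hy.1, hW.2.2.1 y (hRS hy.1) s' (hRS hs') m (hRS hm) hy.2.1 hord, fun hym => hne ?_⟩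
    exact hW.2.1 s' (hRS hs') m (hRS hm) hord (hym ▸ hy.2.1)
  exact (hmin s' hs').not_gt (Finset.card_lt_card hsub)

theorem P1Move.card_unassigned (h : P1Move W Δ θ θ') :
    (W.unassigned θ').card + 1 = (W.unassigned θ).card := by
  obtain ⟨s, u, hs, hθs, -, -, rfl, -⟩ := h
  have hmem : s ∈ W.unassigned θ := Finset.mem_filter.2 ⟨hs, hθs⟩
  have : W.unassigned (Function.update θ s (some u)) = (W.unassigned θ).erase s := by
    ext x
    by_cases hxs : x = s <;> simp [unassigned, hxs]
  rw [this, Finset.card_erase_add_one hmem]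

/-- Playing the completion on a minimal open step keeps the domain causally closed. -/
theorem Completable.exists_p1Move (hW : W.WellFormed) (h : W.Completable Δ θ)
    (hθ : W.IsPartialPlan θ) (hne : (W.unassigned θ).Nonempty) :
    ∃ θ', P1Move W Δ θ θ' ∧ W.Completable Δ θ' := by
  obtain ⟨s, hs, hmin⟩ := hW.exists_minimal (Finset.filter_subset _ _) hne
  obtain ⟨hsS, hθs⟩ := Finset.mem_filter.1 hs
  obtain ⟨θc, hθc, hext, havoid⟩ := h
  obtain ⟨u, hu⟩ := Option.ne_none_iff_exists'.1 (hθc.1.2 s hsS)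
  have hext' : Extends θc (Function.update θ s (some u)) := fun x v hx => by
    by_cases hxs : x = s
    · subst hxs
      simpa [hu] using hx
    · exact hext x v (by rwa [Function.update_of_ne hxs] at hx)
  have hclosed : ∀ s₁ s₂, s₁ ∈ W.S → s₂ ∈ W.S → Function.update θ s (some u) s₁ ≠ none →
      W.ord s₂ s₁ → s₂ ≠ s₁ → Function.update θ s (some u) s₂ ≠ none := by
    intro s₁ s₂ h₁ h₂ hne hord hneq
    by_cases h2s : s₂ = s
    · simp [h2s]
    rw [Function.update_of_ne h2s]
    by_cases h1s : s₁ = s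
    · subst h1s
      exact fun hnone => h2s (hmin s₂ (Finset.mem_filter.2 ⟨h₂, hnone⟩) hord)
    · exact hθ.2 s₁ s₂ h₁ h₂ (by rwa [Function.update_of_ne h1s] at hne) hord hneq
  refine ⟨_, ⟨s, u, hsS, hθs, (hθc.1.1.1 s u hu).2, havoid s u hθs hu, rfl,
    ⟨fun x v hx => hθc.1.1.1 x v (hext' x v hx), hclosed⟩, hθc.2.mono hext'⟩,
    θc, hθc, hext', fun x v hx hv => havoid x v ?_ hv⟩
  have hxs : x ≠ s := fun h => by simp [h] at hx
  rwa [Function.update_of_ne hxs] at hx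

end Completion

section Plays

variable {W : WAP σ υ} {τ π : List (σ × υ)}

theorem functional_append_singleton_iff (s : σ) (u : υ) :
    Functional (τ ++ [(s, u)]) ↔ Functional τ ∧ planOf τ s = none := by
  rw [Functional, Functional, List.map_append, List.nodup_append_comm, planOf_eq_none_iff]
  simp [and_comm]

theorem IsPlay.card_unassigned (h : W.IsPlay τ) :
    (W.unassigned (planOf τ)).card = W.S.card - τ.length :=
  card_unassigned_planOf W h.1 fun s hs => by
    obtain ⟨u, hu⟩ := Option.ne_none_iff_exists'.1 ((planOf_ne_none_iff τ s).2 hs)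
    exact (h.2.1.1 s u hu).1

theorem IsPlay.unassigned_nonempty (h : W.IsPlay τ) (hlen : τ.length < W.S.card) :
    (W.unassigned (planOf τ)).Nonempty :=
  Finset.card_pos.1 (by rw [h.card_unassigned]; omega)

theorem IsPlay.take (h : W.IsPlay π) (i : ℕ)
    (hclosed : ∀ s₁ s₂, s₁ ∈ W.S → s₂ ∈ W.S → planOf (π.take i) s₁ ≠ none → W.ord s₂ s₁ →
      s₂ ≠ s₁ → planOf (π.take i) s₂ ≠ none) :
    W.IsPlay (π.take i) := by
  have hext : Extends (planOf π) (planOf (π.take i)) := by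
    simpa using extends_planOf_append (π.take i) (π.drop i)
  refine ⟨h.1.sublist ?_, ⟨fun s u hs => h.2.1.1 s u (hext s u hs), hclosed⟩, h.2.2.mono hext⟩
  rw [List.map_take]
  exact List.take_sublist _ _

theorem IsPlay.p1Move_append_singleton {s : σ} {u : υ} (h : W.IsPlay (τ ++ [(s, u)])) :
    P1Move W ∅ (planOf τ) (planOf (τ ++ [(s, u)])) := by
  have hs := ((functional_append_singleton_iff s u).1 h.1).2
  have hplan := planOf_append_singleton τ s u hs
  have hsu := h.2.1.1 s u (by simp [hplan])
  exact ⟨s, u, hsu.1, hs, hsu.2, Finset.notMem_empty u, hplan, h.2⟩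

theorem P1Move.exists_isPlay_append {Δ : Finset υ} {θ' : σ → Option υ} (hτ : Functional τ)
    (h : P1Move W Δ (planOf τ) θ') : ∃ p, W.IsPlay (τ ++ [p]) ∧ θ' = planOf (τ ++ [p]) := by
  obtain ⟨s, u, -, hs, -, -, rfl, hθ'⟩ := h
  rw [← planOf_append_singleton τ s u hs] at hθ' ⊢
  exact ⟨(s, u), ⟨(functional_append_singleton_iff s u).2 ⟨hτ, hs⟩, hθ'⟩, rfl⟩

end Plays

theorem staticallyResilient_projectSeq_iff {W : WAP σ υ} (hW : W.WellFormed) {τ : List (σ × υ)}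
    (hτ : W.IsPlay τ) (t : ℕ) :
    (W.projectSeq τ).StaticallyResilient t ↔
      ∀ Δ ⊆ W.U, Δ.card ≤ t → W.Completable Δ (planOf τ) := by
  rw [StaticallyResilient, projectSeq_U]
  refine forall₂_congr fun Δ _ => imp_congr_right fun _ => ⟨?_, ?_⟩
  · rintro ⟨θ, hθ, hθΔ⟩
    have hθτ : ∀ s ∈ τ.map Prod.fst, θ s = none := fun s hs => by
      by_contra hne
      obtain ⟨v, hv⟩ := Option.ne_none_iff_exists'.1 hne
      exact notMem_projectSeq_S W hs (hθ.1.1.1 s v hv).1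
    refine ⟨_, (isValidPlan_projectSeq_iff hW hτ.1 hτ.2.2 hθτ).1 hθ, fun s u hs => by simp [hs],
      fun s u hs hu => hθΔ s u (by simpa [hs] using hu)⟩
  · rintro ⟨θ, hθ, hext, hθΔ⟩
    let θ' s := if s ∈ τ.map Prod.fst then none else θ s
    have hθ' : (fun s => (planOf τ s).or (θ' s)) = θ := funext fun s => by
      by_cases hs : s ∈ τ.map Prod.fst
      · obtain ⟨v, hv⟩ := Option.ne_none_iff_exists'.1 ((planOf_ne_none_iff τ s).2 hs)
        simp [hv, hext s v hv]
      · simp [θ', hs, (planOf_eq_none_iff τ s).2 hs]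
    refine ⟨θ', (isValidPlan_projectSeq_iff hW hτ.1 hτ.2.2 fun s hs => by simp [θ', hs]).2
      (hθ' ▸ hθ), fun s v hv => ?_⟩
    by_cases hs : s ∈ τ.map Prod.fst
    · simp [θ', hs] at hv
    · exact hθΔ s v ((planOf_eq_none_iff τ s).2 hs) (by simpa [θ', hs] using hv)

section OneShotGame

variable [DecidableEq υ] {W : WAP σ υ} {t : ℕ} {Δ : Finset υ} {θ : σ → Option υ}
  {τ : List (σ × υ)}

theorem OneShotWins.of_isValidPlan {n : ℕ} {b : Bool} (h : W.IsValidPlan θ) :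
    OneShotWins W t n Δ θ b := by
  cases n with
  | zero => exact (isValidPlan_iff W θ).1 h
  | succ n => exact Or.inl ((isValidPlan_iff W θ).1 h)

theorem OneShotWins.respond {n : ℕ} {b b' : Bool} {Δ' : Finset υ}
    (h : OneShotWins W t (n + 1) Δ θ b) (hne : (W.unassigned θ).Nonempty)
    (hmove : OneShotP2Move W t Δ b Δ' b') :
    ∃ θ', P1Move W Δ' θ θ' ∧ OneShotWins W t n Δ' θ' b' := by
  rcases h with ⟨htot, -⟩ | ⟨-, h⟩
  · obtain ⟨s, hs⟩ := hne
    exact absurd (Finset.mem_filter.1 hs).2 (htot s (Finset.mem_filter.1 hs).1)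
  · exact h Δ' b' hmove

theorem OneShotWins.completable {n : ℕ} {b : Bool} (h : OneShotWins W t n Δ θ b) :
    W.Completable Δ θ := by
  induction n generalizing θ with
  | zero => exact IsValidPlan.completable ((isValidPlan_iff W θ).2 h) Δ
  | succ n ih =>
    rcases h with h | ⟨-, h⟩
    · exact IsValidPlan.completable ((isValidPlan_iff W θ).2 h) Δ
    · obtain ⟨θ', hmove, hwins⟩ := h Δ b (Or.inl ⟨rfl, rfl⟩)
      exact (ih hwins).of_p1Move hmove

theorem Completable.oneShotWins (hW : W.WellFormed) {n : ℕ} (h : W.Completable Δ θ)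
    (hθ : W.IsPartialPlan θ) (hcard : (W.unassigned θ).card ≤ n) :
    OneShotWins W t n Δ θ true := by
  induction n generalizing θ with
  | zero => exact .of_isValidPlan (h.isValidPlan hθ (Finset.card_eq_zero.1 (by omega)))
  | succ n ih =>
    by_cases hne : (W.unassigned θ).Nonempty
    · refine Or.inr ⟨Finset.filter_nonempty_iff.1 hne, ?_⟩
      rintro Δ' b' (⟨rfl, rfl⟩ | ⟨⟨⟩, -⟩)
      obtain ⟨θ', hmove, hθ'⟩ := h.exists_p1Move hW hθ hne
      have hθ'pp : W.IsPartialPlan θ' := by obtain ⟨-, -, -, -, -, -, -, h, -⟩ := hmove; exact h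
      exact ⟨θ', hmove, ih hθ' hθ'pp (by have := hmove.card_unassigned; omega)⟩
    · exact .of_isValidPlan (h.isValidPlan hθ (Finset.not_nonempty_iff_eq_empty.1 hne))

/-- Player 1 wins the one-shot game from the position reached by the strike-free opening `τ`. -/
def OneShotWinsAfter (W : WAP σ υ) (t : ℕ) (τ : List (σ × υ)) : Prop :=
  OneShotWins W t (W.S.card - τ.length) ∅ (planOf τ) false

theorem oneShotWinsAfter_nil_iff : W.OneShotWinsAfter t [] ↔ W.OneShotResilient t := Iff.rfl

theorem oneShotWinsAfter_iff_of_length_eq (hlen : τ.length = W.S.card) :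
    W.OneShotWinsAfter t τ ↔ W.IsValidPlan (planOf τ) := by
  rw [OneShotWinsAfter, hlen, Nat.sub_self, OneShotWins, isValidPlan_iff]

theorem OneShotWinsAfter.exists_append_singleton (hτ : W.IsPlay τ) (h : W.OneShotWinsAfter t τ)
    (hlen : τ.length < W.S.card) :
    ∃ p, W.IsPlay (τ ++ [p]) ∧ W.OneShotWinsAfter t (τ ++ [p]) := by
  obtain ⟨n, hn⟩ : ∃ n, W.S.card - τ.length = n + 1 := ⟨W.S.card - τ.length - 1, by omega⟩
  rw [OneShotWinsAfter, hn] at h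
  obtain ⟨θ', hmove, hwins⟩ := h.respond (hτ.unassigned_nonempty hlen) (Or.inl ⟨rfl, rfl⟩)
  obtain ⟨p, hp, rfl⟩ := hmove.exists_isPlay_append hτ.1
  refine ⟨p, hp, ?_⟩
  rwa [OneShotWinsAfter, List.length_append, List.length_singleton, ← Nat.sub_sub, hn,
    Nat.add_sub_cancel]

/-- The answer to a strike right after `τ` shows that the projection along `τ` is resilient. -/
theorem OneShotWinsAfter.staticallyResilient_projectSeq (hW : W.WellFormed) (hτ : W.IsPlay τ)
    (h : W.OneShotWinsAfter t τ) (hlen : τ.length < W.S.card) :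
    (W.projectSeq τ).StaticallyResilient t := by
  rw [staticallyResilient_projectSeq_iff hW hτ]
  intro Δ hΔU hΔt
  obtain ⟨n, hn⟩ : ∃ n, W.S.card - τ.length = n + 1 := ⟨W.S.card - τ.length - 1, by omega⟩
  rw [OneShotWinsAfter, hn] at h
  obtain ⟨θ', hmove, hwins⟩ := h.respond (hτ.unassigned_nonempty hlen)
    (Or.inr ⟨rfl, rfl, Finset.empty_subset Δ, hΔU, by rwa [Finset.sdiff_empty]⟩)
  exact hwins.completable.of_p1Move hmove

/-- Player 1 follows `τ ++ [p]` while Player 2 passes, and after a strike completes the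
valid plan that the resilience of the projection along `τ` provides. -/
theorem OneShotWinsAfter.of_append_singleton (hW : W.WellFormed) {p : σ × υ} (hτ : W.IsPlay τ)
    (hτp : W.IsPlay (τ ++ [p])) (hlen : τ.length < W.S.card)
    (hres : (W.projectSeq τ).StaticallyResilient t) (h : W.OneShotWinsAfter t (τ ++ [p])) :
    W.OneShotWinsAfter t τ := by
  have hn : W.S.card - τ.length = W.S.card - (τ ++ [p]).length + 1 := by simp; omega
  have hne := hτ.unassigned_nonempty hlen
  rw [OneShotWinsAfter, hn]
  refine Or.inr ⟨Finset.filter_nonempty_iff.1 hne, ?_⟩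
  rintro Δ b (⟨rfl, rfl⟩ | ⟨-, rfl, -, hΔU, hΔt⟩)
  · obtain ⟨s, u⟩ := p
    exact ⟨_, hτp.p1Move_append_singleton, h⟩
  · rw [Finset.sdiff_empty] at hΔt
    have hc := (staticallyResilient_projectSeq_iff hW hτ t).1 hres Δ hΔU hΔt
    exact (hc.oneShotWins hW hτ.2.1 (by rw [hτ.card_unassigned, hn])).respond hne
      (Or.inl ⟨rfl, rfl⟩)

theorem OneShotResilient.exists_winning_plays (h : W.OneShotResilient t) :
    ∀ k ≤ W.S.card, ∃ π : List (σ × υ), π.length = k ∧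
      ∀ i ≤ k, W.IsPlay (π.take i) ∧ W.OneShotWinsAfter t (π.take i) := by
  intro k
  induction k with
  | zero =>
    intro _
    have hnil : W.IsPlay [] := ⟨List.nodup_nil, ⟨fun s u h => by simp [planOf] at h,
      fun _ _ _ _ h => by simp [planOf] at h⟩, h.completable.valid⟩
    exact ⟨[], rfl, fun i _ => by simpa using ⟨hnil, h⟩⟩
  | succ k ih =>
    intro hk
    obtain ⟨π, hlen, hπ⟩ := ih (by omega)
    have hπk := List.take_of_length_le hlen.le ▸ hπ k le_rfl
    obtain ⟨p, hp, hwins⟩ := hπk.2.exists_append_singleton hπk.1 (by omega)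
    refine ⟨π ++ [p], by simp [hlen], fun i hi => ?_⟩
    rcases hi.lt_or_eq with hi | rfl
    · rw [List.take_append_of_le_length (by omega)]
      exact hπ i (by omega)
    · rw [List.take_of_length_le (by simp [hlen])]
      exact ⟨hp, hwins⟩

theorem oneShotWinsAfter_take_of_staticallyResilient (hW : W.WellFormed) {π : List (σ × υ)}
    (hlen : π.length = W.S.card) (hplays : ∀ i ≤ π.length, W.IsPlay (π.take i))
    (hvalid : W.IsValidPlan (planOf π))
    (hres : ∀ i < W.S.card, (W.projectSeq (π.take i)).StaticallyResilient t) :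
    ∀ i ≤ W.S.card, W.OneShotWinsAfter t (π.take i) := by
  refine fun i hi => Nat.decreasingInduction (fun k hk hwins => ?_) ?_ hi
  · have hk' : k < π.length := hlen ▸ hk
    have hplay := hplays (k + 1) (by omega)
    rw [List.take_add_one, List.getElem?_eq_getElem hk', Option.toList_some] at hwins hplay
    exact hwins.of_append_singleton hW (hplays k (by omega)) hplay (by simp; omega) (hres k hk)
  · rwa [← hlen, List.take_length, oneShotWinsAfter_iff_of_length_eq hlen]

end OneShotGame

end WAP

/-- `W` (with `|S| = N`) is one-shot resilient for budget `t`
if and only if there is a functional sequence `π = (s₁,u₁)⋯(s_N,u_N)` such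
that (a) `θ_π` is a valid plan, (b) every prefix of `π` has a causally closed
domain, and (c) for every `0 ≤ i ≤ N−1`, the policy `W_i` obtained from `W`
by successively projecting along the first `i` assignments of `π` is
statically resilient for budget `t`. -/
theorem oneShot_resilient_iff_exists_sequence_of_statically_resilient
    {σ υ : Type} [DecidableEq σ] [DecidableEq υ]
    (W : WAP σ υ) (hW : W.WellFormed) (t : ℕ) :
    W.OneShotResilient t ↔
      ∃ π : List (σ × υ), π.length = W.S.card ∧ WAP.Functional π ∧
        W.IsValidPlan (WAP.planOf π) ∧
        (∀ i ≤ π.length, ∀ s₁ s₂, s₁ ∈ W.S → s₂ ∈ W.S →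
          WAP.planOf (π.take i) s₁ ≠ none → W.ord s₂ s₁ → s₂ ≠ s₁ →
          WAP.planOf (π.take i) s₂ ≠ none) ∧
        ∀ i < W.S.card, (W.projectSeq (π.take i)).StaticallyResilient t := by
  constructor
  · intro h
    obtain ⟨π, hlen, hπ⟩ := h.exists_winning_plays W.S.card le_rfl
    have hπN := List.take_of_length_le hlen.le ▸ hπ _ le_rfl
    refine ⟨π, hlen, hπN.1.1, (WAP.oneShotWinsAfter_iff_of_length_eq hlen).1 hπN.2,
      fun i hi => (hπ i (hlen ▸ hi)).1.2.1.2, fun i hi => ?_⟩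
    exact (hπ i hi.le).2.staticallyResilient_projectSeq hW (hπ i hi.le).1 (by simp [hlen, hi])
  · rintro ⟨π, hlen, hfun, hvalid, hclosed, hres⟩
    have hπ : W.IsPlay π := ⟨hfun, hvalid.1.1, hvalid.2⟩
    have hwins := WAP.oneShotWinsAfter_take_of_staticallyResilient hW hlen
      (fun i hi => hπ.take i (hclosed i hi)) hvalid hres 0 (Nat.zero_le _)
    exact WAP.oneShotWinsAfter_nil_iff.1 hwins
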